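/- arXiv:2105.08044 — 3 statements merged into one kernel-verified Lean document; each statement's English description precedes it below -/
import Mathlib

section
/- For α, β ∈ ℂ \ {0,1}, if (x,y,u,v) ∈ S_{α,β} and y ≠ 0, then u = x(x-1)(x-α)/y and v = (x-1)(x-α)(u-1)(u-β)/y; conversely, for any x ∈ ℂ and y ∈ ℂ \ {0}, these formulas define a point of S_{α,β}. Hence (x,y,u,v) ↦ (x,y) is a bijection from {(x,y,u,v) ∈ S_{α,β} : y ≠ 0} onto ℂ × (ℂ \ {0}). -/
open Complex

/-- The defining equations of the affine surface `S_{α,β} ⊆ ℂ⁴`. -/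
def Sab (α β x y u v : ℂ) : Prop :=
  y * u = x * (x - 1) * (x - α) ∧
  x * v = u * (u - 1) * (u - β) ∧
  y * v = (x - 1) * (x - α) * (u - 1) * (u - β)

theorem Sab.eq_div {α β x y u v : ℂ} (h : Sab α β x y u v) (hy : y ≠ 0) :
    u = x * (x - 1) * (x - α) / y ∧ v = (x - 1) * (x - α) * (u - 1) * (u - β) / y := by
  obtain ⟨hu, -, hv⟩ := h
  constructor
  · rw [eq_div_iff hy]
    linear_combination hu
  · rw [eq_div_iff hy]
    linear_combination hv

theorem Sab.unique {α β x y u v u' v' : ℂ} (h : Sab α β x y u v) (h' : Sab α β x y u' v')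
    (hy : y ≠ 0) : u = u' ∧ v = v' := by
  obtain ⟨hu, hv⟩ := h.eq_div hy
  obtain ⟨hu', hv'⟩ := h'.eq_div hy
  obtain rfl : u = u' := hu.trans hu'.symm
  exact ⟨rfl, hv.trans hv'.symm⟩

theorem sab_of_div (α β x : ℂ) {y : ℂ} (hy : y ≠ 0) :
    Sab α β x y (x * (x - 1) * (x - α) / y)
      ((x - 1) * (x - α) * (x * (x - 1) * (x - α) / y - 1) *
        (x * (x - 1) * (x - α) / y - β) / y) := by
  refine ⟨?_, ?_, ?_⟩ <;> field_simp

theorem stmt4_general (α β : ℂ) :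
    (∀ x y u v : ℂ, Sab α β x y u v → y ≠ 0 →
        u = x * (x - 1) * (x - α) / y ∧ v = (x - 1) * (x - α) * (u - 1) * (u - β) / y) ∧
    (∀ x y : ℂ, y ≠ 0 →
        Sab α β x y (x * (x - 1) * (x - α) / y)
          ((x - 1) * (x - α) * (x * (x - 1) * (x - α) / y - 1) *
            (x * (x - 1) * (x - α) / y - β) / y)) ∧
    Set.BijOn (fun p : ℂ × ℂ × ℂ × ℂ => (p.1, p.2.1))
      {p : ℂ × ℂ × ℂ × ℂ | Sab α β p.1 p.2.1 p.2.2.1 p.2.2.2 ∧ p.2.1 ≠ 0}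
      ((Set.univ : Set ℂ) ×ˢ ({0}ᶜ : Set ℂ)) := by
  refine ⟨fun x y u v h hy ↦ h.eq_div hy, fun x y hy ↦ sab_of_div α β x hy, ?_, ?_, ?_⟩
  · rintro ⟨x, y, u, v⟩ ⟨-, hy⟩
    exact ⟨trivial, hy⟩
  · rintro ⟨x, y, u, v⟩ ⟨hS, hy⟩ ⟨x', y', u', v'⟩ ⟨hS', -⟩ h
    obtain ⟨rfl, rfl⟩ := Prod.mk.inj h
    obtain ⟨rfl, rfl⟩ := hS.unique hS' hy
    rfl
  · rintro ⟨x, y⟩ ⟨-, hy⟩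
    exact ⟨(x, y, _, _), ⟨sab_of_div α β x hy, hy⟩, rfl⟩

/-- On `{y ≠ 0}`, points of `S_{α,β}` are uniquely determined by `(x,y)`:
`u` and `v` are given by the stated formulas, conversely these formulas always yield a
point of `S_{α,β}`, and the projection `(x,y,u,v) ↦ (x,y)` is a bijection from
`{(x,y,u,v) ∈ S_{α,β} : y ≠ 0}` onto `ℂ × (ℂ \ {0})`. -/
theorem stmt4 (α β : ℂ) (hα0 : α ≠ 0) (hα1 : α ≠ 1) (hβ0 : β ≠ 0) (hβ1 : β ≠ 1) :
    (∀ x y u v : ℂ, Sab α β x y u v → y ≠ 0 →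
        u = x * (x - 1) * (x - α) / y ∧ v = (x - 1) * (x - α) * (u - 1) * (u - β) / y) ∧
    (∀ x y : ℂ, y ≠ 0 →
        Sab α β x y (x * (x - 1) * (x - α) / y)
          ((x - 1) * (x - α) * (x * (x - 1) * (x - α) / y - 1) *
            (x * (x - 1) * (x - α) / y - β) / y)) ∧
    Set.BijOn (fun p : ℂ × ℂ × ℂ × ℂ => (p.1, p.2.1))
      {p : ℂ × ℂ × ℂ × ℂ | Sab α β p.1 p.2.1 p.2.2.1 p.2.2.2 ∧ p.2.1 ≠ 0}
      ((Set.univ : Set ℂ) ×ˢ ({0}ᶜ : Set ℂ)) :=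
  stmt4_general α β
end

section
/- Under the real-linear change of coordinates (x,y,u,v) ↦ (X,Y,U,V) = (x+u, ix-iu, y+v, iy-iv), the defining equations of S_α (yu = x(x-1)(x-α), xv = u(u-1)(u-α), yv = (x-1)(x-α)(u-1)(u-α)) transform into a system of equations with real coefficients; in particular, for any (x,y,u,v) ∈ S_α one has 4(U² + V²) = (Y² + (X-2)²)(Y² + (X-2α)²), where (X,Y,U,V) = (x+u, ix-iu, y+v, iy-iv). -/
/-!
With `Y = i(a - b)` one has `(a + b)² + Y² = 4ab`. Applied to `(y, v)`, `(x - 1, u - 1)` and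
`(x - α, u - α)`, this turns the claimed identity into `16` times the third equation of `S_α`.
-/

open Complex

/-- The defining equations of the affine surface `S_α = S_{α,α} ⊆ ℂ⁴`. -/
def SA (α x y u v : ℂ) : Prop :=
  y * u = x * (x - 1) * (x - α) ∧
  x * v = u * (u - 1) * (u - α) ∧
  y * v = (x - 1) * (x - α) * (u - 1) * (u - α)

theorem add_sq_add_I_mul_sub_sq (a b : ℂ) : (a + b) ^ 2 + (I * a - I * b) ^ 2 = 4 * a * b := by
  linear_combination (a - b) ^ 2 * I_sq

theorem stmt8_general (α : ℂ)
    (x y u v : ℂ) (h : SA α x y u v) :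
    4 * ((y + v) ^ 2 + (I * y - I * v) ^ 2) =
      ((I * x - I * u) ^ 2 + (x + u - 2) ^ 2) *
        ((I * x - I * u) ^ 2 + (x + u - 2 * α) ^ 2) := by
  obtain ⟨-, -, hyv⟩ := h
  have h1 : (I * x - I * u) ^ 2 + (x + u - 2) ^ 2 = 4 * (x - 1) * (u - 1) := by
    linear_combination add_sq_add_I_mul_sub_sq (x - 1) (u - 1)
  have hα : (I * x - I * u) ^ 2 + (x + u - 2 * α) ^ 2 = 4 * (x - α) * (u - α) := by
    linear_combination add_sq_add_I_mul_sub_sq (x - α) (u - α)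
  rw [add_sq_add_I_mul_sub_sq, h1, hα]
  linear_combination 16 * hyv

/-- In the real coordinates `(X,Y,U,V) = (x+u, ix-iu, y+v, iy-iv)`, every point of `S_α`
satisfies the real equation `4(U² + V²) = (Y² + (X-2)²)(Y² + (X-2α)²)`. -/
theorem stmt8 (α : ℂ) (hα0 : α ≠ 0) (hα1 : α ≠ 1)
    (x y u v : ℂ) (h : SA α x y u v) :
    4 * ((y + v) ^ 2 + (I * y - I * v) ^ 2) =
      ((I * x - I * u) ^ 2 + (x + u - 2) ^ 2) *
        ((I * x - I * u) ^ 2 + (x + u - 2 * α) ^ 2) :=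
  stmt8_general α x y u v h
end

section
/- Let d, m₁, m₂, m₃, m₄, m₅ be natural numbers with d ≥ 1 satisfying: Σᵢmᵢ² ≥ d²+1 (negative self-intersection), Σᵢmᵢ(mᵢ−1) ≤ (d−1)(d−2) (nonnegative genus), 2d ≥ m₂+m₃+m₄+m₅ (intersection with a conic through four of the points), d ≥ m₁+m₂+m₃ and d ≥ m₁+m₄+m₅ (intersections with two lines). Then d = 1, m₁ = 0, m₂+m₃ ≤ 1, m₄+m₅ ≤ 1, and (m₂,m₃,m₄,m₅) ∈ {(1,0,1,0),(1,0,0,1),(0,1,0,1),(0,1,1,0)}. -/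
/-!
Writing `m² = m(m-1) + m`, the negativity and genus conditions give
`d² + 1 ≤ (d-1)(d-2) + Σ mᵢ`, while adding the two line conditions gives `Σ mᵢ + m₁ ≤ 2d`.
Together these force `d = 1`; then the genus bound kills every `mᵢ(mᵢ-1)`, so `Σ mᵢ ≥ 2`,
and the two line conditions `m₁ + m₂ + m₃ ≤ 1`, `m₁ + m₄ + m₅ ≤ 1` leave only the four listed
configurations.
-/

theorem Nat.sq_eq_mul_sub_one_add (m : ℕ) : m ^ 2 = m * (m - 1) + m := by
  rcases m with _ | m
  · rfl
  · rw [Nat.add_sub_cancel, sq]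
    ring

theorem Nat.eq_one_of_sq_add_one_le (d : ℕ) (h : d ^ 2 + 1 ≤ (d - 1) * (d - 2) + 2 * d) :
    d = 1 := by
  rcases d with _ | _ | d
  · simp at h
  · rfl
  · rw [show d + 1 + 1 - 1 = d + 1 by omega, show d + 1 + 1 - 2 = d by omega] at h
    nlinarith

theorem stmt12_general (d m₁ m₂ m₃ m₄ m₅ : ℕ)
    (hneg : d ^ 2 + 1 ≤ m₁ ^ 2 + m₂ ^ 2 + m₃ ^ 2 + m₄ ^ 2 + m₅ ^ 2)
    (hgenus : m₁ * (m₁ - 1) + m₂ * (m₂ - 1) + m₃ * (m₃ - 1) + m₄ * (m₄ - 1) + m₅ * (m₅ - 1)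
      ≤ (d - 1) * (d - 2))
    (hline1 : m₁ + m₂ + m₃ ≤ d)
    (hline2 : m₁ + m₄ + m₅ ≤ d) :
    d = 1 ∧ m₁ = 0 ∧ m₂ + m₃ ≤ 1 ∧ m₄ + m₅ ≤ 1 ∧
      ((m₂, m₃, m₄, m₅) = (1, 0, 1, 0) ∨ (m₂, m₃, m₄, m₅) = (1, 0, 0, 1) ∨
        (m₂, m₃, m₄, m₅) = (0, 1, 0, 1) ∨ (m₂, m₃, m₄, m₅) = (0, 1, 1, 0)) := by
  simp only [Nat.sq_eq_mul_sub_one_add m₁, Nat.sq_eq_mul_sub_one_add m₂,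
    Nat.sq_eq_mul_sub_one_add m₃, Nat.sq_eq_mul_sub_one_add m₄,
    Nat.sq_eq_mul_sub_one_add m₅] at hneg
  have hd : d = 1 := Nat.eq_one_of_sq_add_one_le d (by omega)
  subst hd
  refine ⟨rfl, ?_⟩
  simp only [Prod.mk.injEq]
  omega

/-- Arithmetic core of the classification of negative curves on `Y_α`: under the stated
inequalities, `d = 1`, `m₁ = 0`, `m₂+m₃ ≤ 1`, `m₄+m₅ ≤ 1`, and
`(m₂,m₃,m₄,m₅)` is one of `(1,0,1,0), (1,0,0,1), (0,1,0,1), (0,1,1,0)`. -/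
theorem stmt12 (d m₁ m₂ m₃ m₄ m₅ : ℕ) (hd : 1 ≤ d)
    (hneg : d ^ 2 + 1 ≤ m₁ ^ 2 + m₂ ^ 2 + m₃ ^ 2 + m₄ ^ 2 + m₅ ^ 2)
    (hgenus : m₁ * (m₁ - 1) + m₂ * (m₂ - 1) + m₃ * (m₃ - 1) + m₄ * (m₄ - 1) + m₅ * (m₅ - 1)
      ≤ (d - 1) * (d - 2))
    (hconic : m₂ + m₃ + m₄ + m₅ ≤ 2 * d)
    (hline1 : m₁ + m₂ + m₃ ≤ d)
    (hline2 : m₁ + m₄ + m₅ ≤ d) :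
    d = 1 ∧ m₁ = 0 ∧ m₂ + m₃ ≤ 1 ∧ m₄ + m₅ ≤ 1 ∧
      ((m₂, m₃, m₄, m₅) = (1, 0, 1, 0) ∨ (m₂, m₃, m₄, m₅) = (1, 0, 0, 1) ∨
        (m₂, m₃, m₄, m₅) = (0, 1, 0, 1) ∨ (m₂, m₃, m₄, m₅) = (0, 1, 1, 0)) :=
  stmt12_general d m₁ m₂ m₃ m₄ m₅ hneg hgenus hline1 hline2
end
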